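/- Let C be a small category with a coverage τ. The assignments F ↦ Hom_Ĉ(−, F) and G ↦ (c ↦ G(y(c))) are mutually quasi-inverse functors establishing an equivalence between the category of τ-sheaves of sets on C and the full subcategory of presheaves of sets on Ĉ consisting of those τ̂-sheaves that are limit-preserving. (Set-valued incidence of the paper's equivalence Sh(C,τ) ≃ Sh_!(Ĉ,τ̂) induced by the adjunction y^* ⊣ y_*.) -/

import Mathlib

universe u

open CategoryTheory CategoryTheory.Limits Opposite

/-- A family of morphisms `{fᵢ : cᵢ ⟶ c}` indexed by a (small) set. -/
structure CoverFamily (C : Type u) [CategoryTheory.SmallCategory C] (c : C) : Type (u + 1) where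
  ι : Type u
  obj : ι → C
  map : ∀ i : ι, obj i ⟶ c

/-- A coverage (Grothendieck pretopology) in the sense of the paper:
identity families are coverings, and coverings admit weak pullbacks. -/
structure PaperCoverage (C : Type u) [CategoryTheory.SmallCategory C] : Type (u + 1) where
  covers : ∀ c : C, Set (CoverFamily C c)
  id_mem : ∀ c : C, (⟨PUnit, fun _ => c, fun _ => 𝟙 c⟩ : CoverFamily C c) ∈ covers c
  pullback_compat : ∀ {c c' : C} (g : c' ⟶ c) (fam : CoverFamily C c), fam ∈ covers c →
    ∃ fam' ∈ covers c', ∀ j : fam'.ι, ∃ (i : fam.ι) (h : fam'.obj j ⟶ fam.obj i),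
      h ≫ fam.map i = fam'.map j ≫ g

variable {C : Type u} [SmallCategory C]

/-- A morphism `π : Y ⟶ X` of presheaves is a `τ`-local epimorphism if every
morphism `y(c) ⟶ X` admits local lifts through `π` along some covering family of `c`. -/
def IsLocalEpi (τ : PaperCoverage C) {Y X : Cᵒᵖ ⥤ Type u} (π : Y ⟶ X) : Prop :=
  ∀ (c : C) (φ : yoneda.obj c ⟶ X),
    ∃ fam ∈ τ.covers c, ∀ j : fam.ι,
      ∃ φj : yoneda.obj (fam.obj j) ⟶ Y, φj ≫ π = yoneda.map (fam.map j) ≫ φ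

/-- The Mathlib coverage on `C` associated to a paper-style coverage `τ`:
its covering presieves are the presieves generated by the covering families of `τ`. -/
def PaperCoverage.toCoverage (τ : PaperCoverage C) : Coverage C where
  coverings c := { S | ∃ fam ∈ τ.covers c, S = Presieve.ofArrows fam.obj fam.map }
  pullback := by
    rintro c c' g S ⟨fam, hfam, rfl⟩
    obtain ⟨fam', hfam', H⟩ := τ.pullback_compat g fam hfam
    refine ⟨Presieve.ofArrows fam'.obj fam'.map, ⟨fam', hfam', rfl⟩, ?_⟩
    rintro Z h ⟨j⟩
    obtain ⟨i, k, hk⟩ := H j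
    exact ⟨fam.obj i, k, fam.map i, Presieve.ofArrows.mk i, hk⟩

/-- The Grothendieck topology on `C` generated by the coverage `τ`. -/
def PaperCoverage.topology (τ : PaperCoverage C) : GrothendieckTopology C :=
  τ.toCoverage.toGrothendieck

/-- The coverage `τ̂` on `Ĉ` whose covering families are the singleton families
`{π : Y ⟶ X}` with `π` a τ-local epimorphism. -/
def hatCoverage (τ : PaperCoverage C) : Coverage (Cᵒᵖ ⥤ Type u) where
  coverings X := { S | ∃ (Y : Cᵒᵖ ⥤ Type u) (π : Y ⟶ X),
    IsLocalEpi τ π ∧ S = Presieve.singleton π }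
  pullback := by
    rintro X Z g S ⟨Y, π, hπ, rfl⟩
    have hfst : IsLocalEpi τ (pullback.fst g π) := by
      intro c φ
      obtain ⟨fam, hfam, H⟩ := hπ c (φ ≫ g)
      refine ⟨fam, hfam, fun j => ?_⟩
      obtain ⟨φj, hφj⟩ := H j
      refine ⟨pullback.lift (yoneda.map (fam.map j) ≫ φ) φj ?_, ?_⟩
      · rw [Category.assoc, ← hφj]
      · exact pullback.lift_fst _ _ _
    refine ⟨Presieve.singleton (pullback.fst g π),
      ⟨pullback g π, pullback.fst g π, hfst, rfl⟩, ?_⟩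
    rintro W h ⟨⟩
    exact ⟨_, pullback.snd g π, π, Presieve.singleton.mk, pullback.condition.symm⟩

/-- The Grothendieck topology on `Ĉ` generated by the coverage `τ̂` of
τ-local epimorphisms. -/
def hatTopology (τ : PaperCoverage C) : GrothendieckTopology (Cᵒᵖ ⥤ Type u) :=
  (hatCoverage τ).toGrothendieck

/-- A presheaf of sets `G` on `Ĉ` is limit-preserving if it sends colimits in `Ĉ` to
limits in `Set`: for every small diagram `D`, the cone obtained by applying `G` to the
colimit cocone of `D` is a limit cone (i.e. the canonical map
`G(colim D) ⟶ lim G(D(j))` is a bijection). -/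
def LimitPreserving (G : (Cᵒᵖ ⥤ Type u)ᵒᵖ ⥤ Type u) : Prop :=
  ∀ (J : Type u) (_ : SmallCategory J) (D : J ⥤ Cᵒᵖ ⥤ Type u),
    Nonempty (IsLimit (G.mapCone (colimit.cocone D).op))

/-!
Every presheaf `X` on `C` is the colimit of the representables over it, so a limit-preserving
presheaf `G` on `Ĉ` is determined by its restriction `yᵒᵖ ⋙ G`, and in fact represented by it:
`G ≅ Hom(−, yᵒᵖ ⋙ G)`. What remains is to match the sheaf conditions. A local epimorphism
`π : Y ⟶ X` factors as an epimorphism of presheaves, which is effective, followed by a locally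
bijective monomorphism, which a `τ`-sheaf `F` cannot tell apart from an isomorphism; hence
`Hom(−, F)` is a `τ̂`-sheaf. Conversely, the inclusion of the sieve generated by a covering family
is a local epimorphism, and the sheaf condition of `Hom(−, F)` along it is the sheaf condition
of `F` for that family.
-/

namespace CategoryTheory

theorem Presieve.IsSheaf.isSheafFor_yoneda_singleton {J : GrothendieckTopology C}
    {F : Cᵒᵖ ⥤ Type u} (hF : Presieve.IsSheaf J F) {Y X : Cᵒᵖ ⥤ Type u} (π : Y ⟶ X)
    [Presheaf.IsLocallySurjective J π] :
    Presieve.IsSheafFor (yoneda.obj F) (Presieve.singleton π) := by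
  set p := Subfunctor.toRange π
  set i := (Subfunctor.range π).ι
  have hπ : p ≫ i = π := Subfunctor.toRange_ι π
  have := IsRegularEpiCategory.regularEpiOfEpi p
  have : Presheaf.IsLocallySurjective J (p ≫ i) := by rwa [hπ]
  have : Presheaf.IsLocallySurjective J i :=
    Presheaf.isLocallySurjective_of_isLocallySurjective J p i
  have hi := J.W_of_isLocallyBijective i F ((isSheaf_iff_isSheaf_of_type J F).2 hF)
  rw [Presieve.isSheafFor_singleton]
  intro t ht
  obtain ⟨s, hs : i ≫ s = _⟩ :=
    hi.2 (EffectiveEpi.desc p t fun g₁ g₂ h => ht g₁ g₂ (by rw [← hπ, reassoc_of% h]))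
  have hπs : π ≫ s = t := by rw [← hπ, Category.assoc, hs, EffectiveEpi.fac]
  refine ⟨s, hπs, fun s' (hs' : π ≫ s' = t) => hi.1 ?_⟩
  apply (cancel_epi p).1
  simp only [← Category.assoc, hπ, hs', hπs]

lemma Presieve.isSheafFor_of_isSheafFor_yoneda_functorInclusion {P : Cᵒᵖ ⥤ Type u} {c : C}
    {S : Sieve c} (h : Presieve.IsSheafFor (yoneda.obj P) (.singleton S.functorInclusion)) :
    Presieve.IsSheafFor P (S : Presieve c) := by
  rw [Presieve.isSheafFor_iff_yonedaSheafCondition]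
  intro f
  exact Presieve.isSheafFor_singleton.1 h f fun p₁ p₂ hp => by rw [cancel_mono] at hp; rw [hp]

noncomputable def restrictionYonedaComparison :
    𝟭 ((Cᵒᵖ ⥤ Type u)ᵒᵖ ⥤ Type u) ⟶
      (Functor.whiskeringLeft _ _ (Type u)).obj yoneda.op ⋙ yoneda where
  app G :=
    { app X := ↾fun s =>
        { app c := ↾fun x => G.map (yonedaEquiv.symm x).op s
          naturality c c' f := by
            ext x
            dsimp
            rw [yonedaEquiv_symm_map, op_comp, Functor.map_comp_apply] }
      naturality X X' θ := by
        ext s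
        refine NatTrans.ext (funext fun c => ?_)
        ext x
        dsimp
        rw [← yonedaEquiv_symm_naturality_right, op_comp, Functor.map_comp_apply]
        rfl }
  naturality G G' ν := by
    ext X s
    refine NatTrans.ext (funext fun c => ?_)
    ext x
    simp [NatTrans.naturality_apply]

end CategoryTheory

section Sheaves

variable {τ : PaperCoverage C}

lemma isLocalEpi_iff {Y X : Cᵒᵖ ⥤ Type u} (π : Y ⟶ X) :
    IsLocalEpi τ π ↔ ∀ (c : C) (x : X.obj (op c)), ∃ fam ∈ τ.covers c, ∀ j : fam.ι,
      ∃ y : Y.obj (op (fam.obj j)), π.app _ y = X.map (fam.map j).op x := by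
  refine forall_congr' fun c => yonedaEquiv.forall_congr fun φ => exists_congr fun fam =>
    and_congr_right' <| forall_congr' fun j => yonedaEquiv.exists_congr fun φj => ?_
  rw [← yonedaEquiv.apply_eq_iff_eq, yonedaEquiv_comp, yonedaEquiv_naturality]

lemma IsLocalEpi.isLocallySurjective {Y X : Cᵒᵖ ⥤ Type u} {π : Y ⟶ X} (h : IsLocalEpi τ π) :
    Presheaf.IsLocallySurjective τ.topology π where
  imageSieve_mem {c} x := by
    obtain ⟨fam, hfam, H⟩ := (isLocalEpi_iff π).1 h c x
    refine τ.toCoverage.mem_toGrothendieck_sieves_of_superset ?_ ⟨fam, hfam, rfl⟩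
    rintro _ _ ⟨j⟩
    exact H j

lemma isLocalEpi_functorInclusion_generate {c : C} {fam : CoverFamily C c}
    (hfam : fam ∈ τ.covers c) :
    IsLocalEpi τ (Sieve.generate (Presieve.ofArrows fam.obj fam.map)).functorInclusion := by
  rw [isLocalEpi_iff]
  intro c' g
  obtain ⟨fam', hfam', H⟩ := τ.pullback_compat g fam hfam
  refine ⟨fam', hfam', fun j => ?_⟩
  obtain ⟨i, h, hh⟩ := H j
  exact ⟨⟨fam'.map j ≫ g, _, h, fam.map i, ⟨i⟩, hh⟩, rfl⟩

theorem isSheaf_hatTopology_yoneda_obj_iff {F : Cᵒᵖ ⥤ Type u} :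
    Presieve.IsSheaf (hatTopology τ) (yoneda.obj F) ↔ Presieve.IsSheaf τ.topology F := by
  refine ⟨fun h => ?_, fun hF => ?_⟩
  · refine (Presieve.isSheaf_coverage _ _).2 ?_
    rintro c _ ⟨fam, hfam, rfl⟩
    rw [Presieve.isSheafFor_iff_generate]
    exact Presieve.isSheafFor_of_isSheafFor_yoneda_functorInclusion <|
      (Presieve.isSheaf_coverage _ _).1 h _ ⟨_, _, isLocalEpi_functorInclusion_generate hfam, rfl⟩
  · refine (Presieve.isSheaf_coverage _ _).2 ?_
    rintro X _ ⟨Y, π, hπ, rfl⟩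
    have := hπ.isLocallySurjective
    exact hF.isSheafFor_yoneda_singleton π

end Sheaves

lemma limitPreserving_yoneda_obj (X : Cᵒᵖ ⥤ Type u) : LimitPreserving (yoneda.obj X) :=
  fun _ _ D => ⟨isLimitOfPreserves (yoneda.obj X) (colimit.isColimit D).op⟩

namespace LimitPreserving

variable {G : (Cᵒᵖ ⥤ Type u)ᵒᵖ ⥤ Type u}

noncomputable def isLimitMapConeOp (hG : LimitPreserving G) {J : Type u} [SmallCategory J]
    {D : J ⥤ Cᵒᵖ ⥤ Type u} {cc : Cocone D} (hcc : IsColimit cc) : IsLimit (G.mapCone cc.op) :=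
  have : PreservesLimit D.op G :=
    preservesLimit_of_preserves_limit_cone (colimit.isColimit D).op (hG J inferInstance D).some
  isLimitOfPreserves G hcc.op

lemma ext_of_yoneda (hG : LimitPreserving G) {Z : Cᵒᵖ ⥤ Type u} {a b : G.obj (op Z)}
    (h : ∀ (c : C) (ψ : yoneda.obj c ⟶ Z), G.map ψ.op a = G.map ψ.op b) : a = b := by
  have hl := hG.isLimitMapConeOp (Presheaf.isColimitTautologicalCocone Z)
  apply (Types.isLimitEquivSections hl).injective
  ext j
  exact h j.unop.left j.unop.hom

lemma restrictionYonedaComparison_injective (hG : LimitPreserving G) (X : (Cᵒᵖ ⥤ Type u)ᵒᵖ) :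
    Function.Injective ((restrictionYonedaComparison.app G).app X) := by
  intro a b hab
  refine hG.ext_of_yoneda fun c ψ => ?_
  simpa [restrictionYonedaComparison] using
    ConcreteCategory.congr_hom (congr_fun (congr_arg NatTrans.app hab) (op c)) (yonedaEquiv ψ)

lemma restrictionYonedaComparison_surjective (hG : LimitPreserving G) (X : (Cᵒᵖ ⥤ Type u)ᵒᵖ) :
    Function.Surjective ((restrictionYonedaComparison.app G).app X) := by
  intro θ
  -- `θ` is a compatible family of elements of `G` over the representables above `X`.
  have hl := hG.isLimitMapConeOp (Presheaf.isColimitTautologicalCocone X.unop)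
  let e := Types.isLimitEquivSections hl
  have hsec : ∀ {j j' : (CostructuredArrow yoneda X.unop)ᵒᵖ} (φ : j ⟶ j'),
      G.map (yoneda.map φ.unop.left).op (θ.app (op j.unop.left) (yonedaEquiv j.unop.hom))
        = θ.app (op j'.unop.left) (yonedaEquiv j'.unop.hom) := by
    intro j j' φ
    refine (θ.naturality_apply φ.unop.left.op (yonedaEquiv j.unop.hom)).symm.trans ?_
    rw [yonedaEquiv_naturality, CostructuredArrow.w φ.unop]
  refine ⟨e.symm ⟨fun j => θ.app (op j.unop.left) (yonedaEquiv j.unop.hom), hsec⟩, ?_⟩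
  refine NatTrans.ext (funext fun c => ?_)
  ext x
  exact (Types.isLimitEquivSections_symm_apply hl _
    (op (CostructuredArrow.mk (yonedaEquiv.symm x)))).trans
    (congrArg (θ.app c) (Equiv.apply_symm_apply _ _))

lemma isIso_restrictionYonedaComparison_app (hG : LimitPreserving G) :
    IsIso (restrictionYonedaComparison.app G) :=
  have (X : (Cᵒᵖ ⥤ Type u)ᵒᵖ) : IsIso ((restrictionYonedaComparison.app G).app X) :=
    (isIso_iff_bijective _).2
      ⟨hG.restrictionYonedaComparison_injective X, hG.restrictionYonedaComparison_surjective X⟩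
  NatIso.isIso_of_isIso_app _

end LimitPreserving

lemma isIso_whiskerLeft_ι_restrictionYonedaComparison
    {P : ObjectProperty ((Cᵒᵖ ⥤ Type u)ᵒᵖ ⥤ Type u)} (hP : ∀ G, P G → LimitPreserving G) :
    IsIso (P.ι.whiskerLeft restrictionYonedaComparison) :=
  have (G : P.FullSubcategory) : IsIso ((P.ι.whiskerLeft restrictionYonedaComparison).app G) :=
    (hP _ G.2).isIso_restrictionYonedaComparison_app
  NatIso.isIso_of_isIso_app _

namespace PaperCoverage

variable (τ : PaperCoverage C)

abbrev isSheaf : ObjectProperty (Cᵒᵖ ⥤ Type u) :=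
  fun F => Presieve.IsSheaf τ.topology F

abbrev isLimitPreservingHatSheaf : ObjectProperty ((Cᵒᵖ ⥤ Type u)ᵒᵖ ⥤ Type u) :=
  fun G => Presieve.IsSheaf (hatTopology τ) G ∧ LimitPreserving G

noncomputable def sheafToHatSheaf :
    τ.isSheaf.FullSubcategory ⥤ τ.isLimitPreservingHatSheaf.FullSubcategory :=
  ObjectProperty.lift _ (τ.isSheaf.ι ⋙ yoneda) fun F =>
    ⟨isSheaf_hatTopology_yoneda_obj_iff.2 F.2, limitPreserving_yoneda_obj F.obj⟩

noncomputable def hatSheafToSheaf :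
    τ.isLimitPreservingHatSheaf.FullSubcategory ⥤ τ.isSheaf.FullSubcategory :=
  ObjectProperty.lift _
    (τ.isLimitPreservingHatSheaf.ι ⋙ (Functor.whiskeringLeft _ _ _).obj yoneda.op) fun G =>
      have := G.2.2.isIso_restrictionYonedaComparison_app
      isSheaf_hatTopology_yoneda_obj_iff.1 <|
        Presieve.isSheaf_iso _ (asIso (restrictionYonedaComparison.app G.obj)) G.2.1

noncomputable def sheafEquivHatSheaf :
    τ.isSheaf.FullSubcategory ≌ τ.isLimitPreservingHatSheaf.FullSubcategory :=
  .mk τ.sheafToHatSheaf τ.hatSheafToSheaf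
    (((ObjectProperty.fullyFaithfulι _).whiskeringRight _).preimageIso
      (τ.isSheaf.ι.isoWhiskerLeft curriedYonedaLemma'.symm))
    (((ObjectProperty.fullyFaithfulι _).whiskeringRight _).preimageIso <|
      have := isIso_whiskerLeft_ι_restrictionYonedaComparison (P := τ.isLimitPreservingHatSheaf)
        fun _ hG => hG.2
      (asIso (τ.isLimitPreservingHatSheaf.ι.whiskerLeft restrictionYonedaComparison)).symm)

end PaperCoverage

/-- The assignments `F ↦ Hom_Ĉ(−, F)` and `G ↦ (c ↦ G(y(c)))` are
mutually quasi-inverse functors establishing an equivalence between the category of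
τ-sheaves of sets on `C` and the full subcategory of presheaves of sets on `Ĉ` consisting
of the limit-preserving τ̂-sheaves. -/
theorem sheaves_equiv_limitPreserving_hatSheaves (τ : PaperCoverage C) :
    ∃ e : ObjectProperty.FullSubcategory (fun F : Cᵒᵖ ⥤ Type u => Presieve.IsSheaf τ.topology F) ≌
        ObjectProperty.FullSubcategory (fun G : (Cᵒᵖ ⥤ Type u)ᵒᵖ ⥤ Type u =>
          Presieve.IsSheaf (hatTopology τ) G ∧ LimitPreserving G),
      (∀ F, Nonempty ((e.functor.obj F).obj ≅ yoneda.obj F.obj)) ∧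
      (∀ G, Nonempty ((e.inverse.obj G).obj ≅ yoneda.op ⋙ G.obj)) :=
  ⟨τ.sheafEquivHatSheaf, fun _ => ⟨Iso.refl _⟩, fun _ => ⟨Iso.refl _⟩⟩
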